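/- For a classifier κ : 𝔹^n → 𝔹 and point v, a feature i occurs in some subset-minimal abductive explanation (AXp) of (v, κ(v)) if and only if it occurs in some subset-minimal contrastive explanation (CXp) of (v, κ(v)). Equivalently, the union of all AXp's equals the union of all CXp's. -/

import Mathlib

open Finset

/-- `X` is a weak abductive explanation (weak AXp) for classifier `κ` at point `v`:
every point agreeing with `v` on `X` gets the same prediction as `v`. -/
def weakAXp {n : ℕ} (κ : (Fin n → Bool) → Bool) (v : Fin n → Bool)
    (X : Finset (Fin n)) : Prop :=
  ∀ x : Fin n → Bool, (∀ i ∈ X, x i = v i) → κ x = κ v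

/-- `X` is an AXp: a subset-minimal weak AXp. -/
def AXp {n : ℕ} (κ : (Fin n → Bool) → Bool) (v : Fin n → Bool)
    (X : Finset (Fin n)) : Prop :=
  weakAXp κ v X ∧ ∀ X' ⊂ X, ¬ weakAXp κ v X'

/-- `Y` is a weak contrastive explanation (weak CXp) for `κ` at `v`:
some point agreeing with `v` outside `Y` gets a different prediction. -/
def weakCXp {n : ℕ} (κ : (Fin n → Bool) → Bool) (v : Fin n → Bool)
    (Y : Finset (Fin n)) : Prop :=
  ∃ x : Fin n → Bool, (∀ i ∉ Y, x i = v i) ∧ κ x ≠ κ v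

/-- `Y` is a CXp: a subset-minimal weak CXp. -/
def CXp {n : ℕ} (κ : (Fin n → Bool) → Bool) (v : Fin n → Bool)
    (Y : Finset (Fin n)) : Prop :=
  weakCXp κ v Y ∧ ∀ Y' ⊂ Y, ¬ weakCXp κ v Y'

/-- A feature is relevant if it occurs in some AXp. -/
def Relevant {n : ℕ} (κ : (Fin n → Bool) → Bool) (v : Fin n → Bool) (i : Fin n) : Prop :=
  ∃ X, AXp κ v X ∧ i ∈ X

/-- A feature is irrelevant if it occurs in no AXp. -/
def Irrelevant {n : ℕ} (κ : (Fin n → Bool) → Bool) (v : Fin n → Bool) (i : Fin n) : Prop :=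
  ¬ Relevant κ v i

/-- `phi κ v S` : average value of `κ` over points agreeing with `v` on `S`
(uniform distribution). -/
noncomputable def phi {n : ℕ} (κ : (Fin n → Bool) → Bool) (v : Fin n → Bool)
    (S : Finset (Fin n)) : ℝ :=
  (1 / 2 ^ (n - S.card)) *
    ∑ x ∈ Finset.univ.filter (fun x : Fin n → Bool => ∀ i ∈ S, x i = v i),
      (if κ x then (1 : ℝ) else 0)

/-- Shapley value of feature `i` for classifier `κ` at point `v`. -/
noncomputable def Sv {n : ℕ} (κ : (Fin n → Bool) → Bool) (v : Fin n → Bool)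
    (i : Fin n) : ℝ :=
  ∑ S ∈ (Finset.univ.erase i).powerset,
    ((S.card.factorial * (n - S.card - 1).factorial : ℝ) / n.factorial) *
      (phi κ v (insert i S) - phi κ v S)

/-- Union of all AXp's equals the union of all CXp's: a feature occurs in some AXp
iff it occurs in some CXp. -/
theorem stmt0 {n : ℕ} (κ : (Fin n → Bool) → Bool) (v : Fin n → Bool)
    (hκ : ∃ a b, κ a ≠ κ b) (i : Fin n) :
    (∃ X, AXp κ v X ∧ i ∈ X) ↔ (∃ Y, CXp κ v Y ∧ i ∈ Y) := by
  classical
  -- minimal element lemma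
  have minlem : ∀ (P : Finset (Fin n) → Prop) (Z : Finset (Fin n)), P Z →
      ∃ M, M ⊆ Z ∧ P M ∧ ∀ M' ⊂ M, ¬ P M' := by
    intro P Z hZ
    obtain ⟨M, hM, hmin⟩ := Finset.exists_minimal
      (s := Z.powerset.filter (fun S => P S)) ⟨Z, by simp [hZ]⟩
    simp only [Finset.mem_filter, Finset.mem_powerset] at hM
    refine ⟨M, hM.1, hM.2, fun M' hM' hPM' => ?_⟩
    exact hM'.2 (hmin (Finset.mem_filter.mpr
      ⟨Finset.mem_powerset.mpr (hM'.subset.trans hM.1), hPM'⟩) hM'.subset)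
  have hit : ∀ X Y, weakAXp κ v X → weakCXp κ v Y → ∃ j, j ∈ X ∧ j ∈ Y := by
    intro X Y hX hY
    obtain ⟨x, hx, hne⟩ := hY
    by_contra h
    push_neg at h
    exact hne (hX x (fun j hj => hx j (h j hj)))
  constructor
  · rintro ⟨X, ⟨hXw, hXmin⟩, hiX⟩
    have h1 : ¬ weakAXp κ v (X.erase i) := hXmin _ (Finset.erase_ssubset hiX)
    simp only [weakAXp, not_forall] at h1
    obtain ⟨x, hx, hne⟩ := h1
    have hZ : weakCXp κ v (X.erase i)ᶜ := by
      refine ⟨x, fun j hj => hx j ?_, hne⟩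
      simpa using hj
    obtain ⟨M, hMZ, hMw, hMmin⟩ := minlem (weakCXp κ v) _ hZ
    obtain ⟨j, hjX, hjM⟩ := hit X M hXw hMw
    have hji : j = i := by
      have := hMZ hjM
      simp only [Finset.mem_compl, Finset.mem_erase] at this
      push_neg at this
      by_contra h
      exact this h hjX
    exact ⟨M, ⟨hMw, hMmin⟩, hji ▸ hjM⟩
  · rintro ⟨Y, ⟨hYw, hYmin⟩, hiY⟩
    have h1 : ¬ weakCXp κ v (Y.erase i) := hYmin _ (Finset.erase_ssubset hiY)
    have hZ : weakAXp κ v (Y.erase i)ᶜ := by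
      intro x hx
      by_contra hne
      exact h1 ⟨x, fun j hj => hx j (Finset.mem_compl.mpr hj), hne⟩
    obtain ⟨M, hMZ, hMw, hMmin⟩ := minlem (weakAXp κ v) _ hZ
    obtain ⟨j, hjM, hjY⟩ := hit M Y hMw hYw
    have hji : j = i := by
      have := hMZ hjM
      simp only [Finset.mem_compl, Finset.mem_erase] at this
      push_neg at this
      by_contra h
      exact this h hjY
    exact ⟨M, ⟨hMw, hMmin⟩, hji ▸ hjM⟩
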